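/- arXiv:2202.02547 — 2 statements merged into one kernel-verified Lean document; each statement's English description precedes it below -/
import Mathlib

section
/- Let V̇(t) ≤ −λ_q‖e(t)‖² + λ_r P²‖E(t)‖² and ẏ(t) = −γy(t) + κ(ϖλ_q‖e(t)‖² − λ_r P²‖E(t)‖²) with κ ∈ [0,1/2], ϖ ∈ [0,1], γ > 0. Suppose additionally y(t) + θ(ϖλ_q‖e(t)‖² − λ_rP²‖E(t)‖²) ≥ 0 with θ ≥ (1−κ)/γ. Then d/dt(V(t) + y(t)) ≤ −(1−ϖ)λ_q‖e(t)‖² − (γ + (κ−1)/θ)y(t) ≤ 0 whenever y(t) ≥ 0. -/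
/-- Lyapunov decrease estimate under the dynamic event-triggered condition:
if V̇(t) ≤ −λ_q‖e‖² + λ_r P²‖E‖², ẏ(t) = −γy(t) + κ(ϖλ_q‖e‖² − λ_r P²‖E‖²) with
κ ∈ [0,1/2], ϖ ∈ [0,1], γ > 0, and y(t) + θ(ϖλ_q‖e‖² − λ_rP²‖E‖²) ≥ 0 with θ ≥ (1−κ)/γ, then
d/dt(V(t)+y(t)) ≤ −(1−ϖ)λ_q‖e‖² − (γ + (κ−1)/θ)y(t) ≤ 0 whenever y(t) ≥ 0. -/
theorem stmt_8 (n : ℕ) (V y : ℝ → ℝ) (t lamq lamr P γ κ ϖ θ : ℝ)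
    (e E : EuclideanSpace ℝ (Fin n))
    (hlamq : 0 ≤ lamq) (hlamr : 0 < lamr) (hP : 0 < P) (hγ : 0 < γ)
    (hκ : κ ∈ Set.Icc (0 : ℝ) (1 / 2)) (hϖ : ϖ ∈ Set.Icc (0 : ℝ) 1)
    (hθ : (1 - κ) / γ ≤ θ)
    (hVdiff : DifferentiableAt ℝ V t) (hydiff : DifferentiableAt ℝ y t)
    (hV : deriv V t ≤ -lamq * ‖e‖ ^ 2 + lamr * P ^ 2 * ‖E‖ ^ 2)
    (hy : deriv y t = -γ * y t + κ * (ϖ * lamq * ‖e‖ ^ 2 - lamr * P ^ 2 * ‖E‖ ^ 2))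
    (htrig : y t + θ * (ϖ * lamq * ‖e‖ ^ 2 - lamr * P ^ 2 * ‖E‖ ^ 2) ≥ 0) :
    deriv (fun s => V s + y s) t ≤ -(1 - ϖ) * lamq * ‖e‖ ^ 2 - (γ + (κ - 1) / θ) * y t ∧
    (0 ≤ y t → deriv (fun s => V s + y s) t ≤ 0) := by
  obtain ⟨hκ0, hκ1⟩ := hκ
  obtain ⟨hϖ0, hϖ1⟩ := hϖ
  have hθ0 : 0 < θ := lt_of_lt_of_le (div_pos (by linarith) hγ) hθ
  have hsum : deriv (fun s => V s + y s) t = deriv V t + deriv y t :=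
    deriv_add hVdiff hydiff
  have hcθ : (1 - κ) / θ * θ = 1 - κ := div_mul_cancel₀ _ (ne_of_gt hθ0)
  have hγθ : 1 - κ ≤ γ * θ := by
    have := (div_le_iff₀ hγ).mp hθ
    linarith
  have hc : (1 - κ) / θ ≤ γ := by
    rw [div_le_iff₀ hθ0]; linarith
  have h1 : 0 ≤ (1 - κ) / θ * (y t + θ * (ϖ * lamq * ‖e‖ ^ 2 - lamr * P ^ 2 * ‖E‖ ^ 2)) :=
    mul_nonneg (div_nonneg (by linarith) hθ0.le) htrig
  have hmain : deriv (fun s => V s + y s) t ≤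
      -(1 - ϖ) * lamq * ‖e‖ ^ 2 - (γ + (κ - 1) / θ) * y t := by
    rw [hsum, hy]
    have h2 : (κ - 1) / θ = -((1 - κ) / θ) := by ring
    rw [h2]
    have h1' : 0 ≤ (1 - κ) / θ * y t +
        (1 - κ) * (ϖ * lamq * ‖e‖ ^ 2 - lamr * P ^ 2 * ‖E‖ ^ 2) := by
      have h := h1
      rw [mul_add, ← mul_assoc, hcθ] at h
      exact h
    nlinarith [h1']
  refine ⟨hmain, fun hy0 => ?_⟩
  have hE : 0 ≤ lamq * ‖e‖ ^ 2 := mul_nonneg hlamq (sq_nonneg _)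
  have h2 : (κ - 1) / θ = -((1 - κ) / θ) := by ring
  have hcoef : 0 ≤ γ + (κ - 1) / θ := by rw [h2]; linarith
  have : 0 ≤ (1 - ϖ) * lamq * ‖e‖ ^ 2 :=
    mul_nonneg (mul_nonneg (by linarith) hlamq) (sq_nonneg _)
  nlinarith [mul_nonneg hcoef hy0]
end

section
/- Suppose ‖E(t)‖ ≤ (C/X_M)(exp(X_M(t − t₀)) − 1) for t ≥ t₀ with C > 0, X_M > 0, and suppose an event is triggered only when ‖E(t)‖ exceeds the threshold B·exp(−βt/2) with B > 0, β ≥ 0. Then the next triggered instant t₁ satisfies t₁ − t₀ ≥ (1/X_M)·log(1 + (X_M B/C)·exp(−βt₁/2)) > 0; in particular the inter-event time is strictly positive (no Zeno behavior). -/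
/-- Zeno exclusion: suppose ‖E(t)‖ ≤ (C/X_M)(exp(X_M(t − t₀)) − 1) for t ≥ t₀ with
C > 0, X_M > 0, and an event is triggered at time t₁ ≥ t₀ only when ‖E(t₁)‖ reaches the
threshold B·exp(−βt₁/2) with B > 0, β ≥ 0. Then
t₁ − t₀ ≥ (1/X_M)·log(1 + (X_M B/C)·exp(−βt₁/2)) > 0, so the inter-event time is
strictly positive. -/
theorem stmt_10 (n : ℕ) (t₀ t₁ X_M C B β : ℝ)
    (hX : 0 < X_M) (hC : 0 < C) (hB : 0 < B) (hβ : 0 ≤ β) (ht : t₀ ≤ t₁)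
    (E : ℝ → EuclideanSpace ℝ (Fin n))
    (hbound : ∀ t ≥ t₀, ‖E t‖ ≤ (C / X_M) * (Real.exp (X_M * (t - t₀)) - 1))
    (htrig : B * Real.exp (-β * t₁ / 2) ≤ ‖E t₁‖) :
    t₁ - t₀ ≥ (1 / X_M) * Real.log (1 + (X_M * B / C) * Real.exp (-β * t₁ / 2)) ∧
    0 < (1 / X_M) * Real.log (1 + (X_M * B / C) * Real.exp (-β * t₁ / 2)) := by
  have hexp : 0 < Real.exp (-β * t₁ / 2) := Real.exp_pos _
  have hkey : B * Real.exp (-β * t₁ / 2) ≤ (C / X_M) * (Real.exp (X_M * (t₁ - t₀)) - 1) :=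
    le_trans htrig (hbound t₁ ht)
  have hkey' : X_M * (B * Real.exp (-β * t₁ / 2)) ≤ C * (Real.exp (X_M * (t₁ - t₀)) - 1) := by
    have h := mul_le_mul_of_nonneg_left hkey hX.le
    have heq : X_M * (C / X_M * (Real.exp (X_M * (t₁ - t₀)) - 1))
        = C * (Real.exp (X_M * (t₁ - t₀)) - 1) := by
      field_simp
    rwa [heq] at h
  have h2 : 1 + (X_M * B / C) * Real.exp (-β * t₁ / 2) ≤ Real.exp (X_M * (t₁ - t₀)) := by
    have h3 : X_M * B / C * Real.exp (-β * t₁ / 2) ≤ Real.exp (X_M * (t₁ - t₀)) - 1 := by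
      rw [div_mul_eq_mul_div, div_le_iff₀ hC]
      nlinarith [hkey']
    linarith
  have hpos : (1:ℝ) < 1 + (X_M * B / C) * Real.exp (-β * t₁ / 2) := by
    nlinarith [mul_pos (div_pos (mul_pos hX hB) hC) hexp]
  have hlog : Real.log (1 + (X_M * B / C) * Real.exp (-β * t₁ / 2)) ≤ X_M * (t₁ - t₀) := by
    calc Real.log (1 + (X_M * B / C) * Real.exp (-β * t₁ / 2))
        ≤ Real.log (Real.exp (X_M * (t₁ - t₀))) :=
          Real.log_le_log (by linarith) h2
      _ = X_M * (t₁ - t₀) := Real.log_exp _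
  have hlogpos : 0 < Real.log (1 + (X_M * B / C) * Real.exp (-β * t₁ / 2)) :=
    Real.log_pos hpos
  constructor
  · rw [ge_iff_le, one_div, inv_mul_le_iff₀ hX] at *
    linarith [hlog]
  · positivity
end
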